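/- Let p_0 be any probability density on ℝ^d, t > 0, n ≥ 1, and x ∈ ℝ^d. Then E[‖∇\hat p_t(x) − ∇p_t(x)‖²] ≤ p_t(x) / (n t (2πt)^{d/2}), where the expectation is over the n i.i.d. samples and ∇p_t(x) = ((∇φ_t) * p_0)(x) = ∫ ((y − x)/t) φ_t(x − y) p_0(y) dy. -/

import Mathlib

/-!
`∇p̂_t(x)` is the sample mean of the i.i.d. vectors `Yᵢ = ∇φ_t(x - Xᵢ)`, whose common expectation
is `∇p_t(x)`. Coordinatewise, the variance of a mean of `n` i.i.d. variables is `1/n` times their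
variance, so the mean squared error is at most `E‖Y‖² / n`. Pointwise
`‖∇φ_t(z)‖² = ‖z‖² φ_t(z)² / t² ≤ φ_t(0) φ_t(z) / t`, because `‖z‖² exp(-‖z‖²/(2t)) ≤ 2t/e ≤ t`;
integrating against `p_0` gives `E‖Y‖² ≤ φ_t(0) p_t(x) / t = p_t(x) / (t (2πt)^{d/2})`.
-/

open MeasureTheory Real
open scoped BigOperators ENNReal

noncomputable section

/-- Euclidean space ℝ^d. -/
abbrev Euc (d : ℕ) : Type := EuclideanSpace ℝ (Fin d)

/-- The centered Gaussian density `φ_t(x) = (2πt)^{-d/2} exp(−‖x‖²/(2t))` on ℝ^d. -/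
def gaussianKernel (d : ℕ) (t : ℝ) (x : Euc d) : ℝ :=
  (2 * π * t) ^ (-(d : ℝ) / 2) * Real.exp (-‖x‖ ^ 2 / (2 * t))

/-- `p0` is a probability density on ℝ^d. -/
def IsProbDensity {d : ℕ} (p0 : Euc d → ℝ) : Prop :=
  Measurable p0 ∧ (∀ x, 0 ≤ p0 x) ∧ (∫ x, p0 x) = 1

/-- The Gaussian-smoothed density `p_t = p_0 * φ_t`. -/
def pt (d : ℕ) (p0 : Euc d → ℝ) (t : ℝ) (x : Euc d) : ℝ :=
  ∫ y, p0 y * gaussianKernel d t (x - y)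

/-- Gradient of `p_t`: `∇p_t(x) = ((∇φ_t) * p_0)(x) = ∫ ((y−x)/t) φ_t(x−y) p_0(y) dy`. -/
def ptGrad (d : ℕ) (p0 : Euc d → ℝ) (t : ℝ) (x : Euc d) : Euc d :=
  ∫ y, (t⁻¹ * (gaussianKernel d t (x - y) * p0 y)) • (y - x)

/-- Score `s_t(x) = ∇ log p_t(x) = ∇p_t(x)/p_t(x)`. -/
def scoreFn (d : ℕ) (p0 : Euc d → ℝ) (t : ℝ) (x : Euc d) : Euc d :=
  (pt d p0 t x)⁻¹ • ptGrad d p0 t x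

/-- Joint law of `n` i.i.d. samples drawn from the density `p0`. -/
def sampleMeasure (d n : ℕ) (p0 : Euc d → ℝ) : Measure (Fin n → Euc d) :=
  Measure.pi fun _ => (volume : Measure (Euc d)).withDensity fun x => ENNReal.ofReal (p0 x)

/-- Gaussian kernel density estimator `\hat p_t(x) = (1/n) Σ_i φ_t(x − X_i)`. -/
def kde (d n : ℕ) (t : ℝ) (X : Fin n → Euc d) (x : Euc d) : ℝ :=
  (n : ℝ)⁻¹ * ∑ i, gaussianKernel d t (x - X i)

/-- Gradient of the Gaussian KDE: `∇\hat p_t(x) = (1/(nt)) Σ_i (X_i − x) φ_t(x − X_i)`. -/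
def kdeGrad (d n : ℕ) (t : ℝ) (X : Fin n → Euc d) (x : Euc d) : Euc d :=
  ((n : ℝ) * t)⁻¹ • ∑ i, gaussianKernel d t (x - X i) • (X i - x)

/-- Threshold `ρ_n = log n / (n (2πt)^{d/2})`. -/
def rhoThresh (d n : ℕ) (t : ℝ) : ℝ :=
  Real.log n / ((n : ℝ) * (2 * π * t) ^ ((d : ℝ) / 2))

/-- Thresholded score estimator `\hat s_t = (∇\hat p_t/\hat p_t) 1{\hat p_t ≥ ρ_n}`. -/
def hatScore (d n : ℕ) (t : ℝ) (X : Fin n → Euc d) (x : Euc d) : Euc d :=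
  if rhoThresh d n t ≤ kde d n t X x then (kde d n t X x)⁻¹ • kdeGrad d n t X x else 0

/-- Total variation distance between densities: `TV(f,g) = (1/2)∫|f−g|`. -/
def tvDist (d : ℕ) (f g : Euc d → ℝ) : ℝ := (1 / 2) * ∫ x, |f x - g x|

/-- Fourier transform `F[f](ω) = ∫ f(x) e^{−i⟨ω,x⟩} dx`. -/
def fourierTf (d : ℕ) (f : Euc d → ℝ) (ω : Euc d) : ℂ :=
  ∫ x, (f x : ℂ) * Complex.exp (-(Complex.I * ((inner ℝ ω x : ℝ) : ℂ)))

/-- Sobolev assumption with smoothness β and radius L: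
`∫ ‖ω‖^{2β} |F[p_0](ω)|² dω ≤ (2π)^d L²`. -/
def SobolevClass (d : ℕ) (β L : ℝ) (p0 : Euc d → ℝ) : Prop :=
  (∫ ω : Euc d, ‖ω‖ ^ (2 * β) * ‖fourierTf d p0 ω‖ ^ 2) ≤ (2 * π) ^ d * L ^ 2

/-- Polynomial tail assumption: `p_0(x) ≤ C₂ (1 + ‖x‖²)^{-(1+γ+d)/2}`. -/
def PolyTail (d : ℕ) (γ C2 : ℝ) (p0 : Euc d → ℝ) : Prop :=
  ∀ x : Euc d, p0 x ≤ C2 * (1 + ‖x‖ ^ 2) ^ (-(1 + γ + (d : ℝ)) / 2)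

/-- Exponential tail assumption: `p_0(x) ≤ C₁ exp(−c₁‖x‖^γ)`. -/
def ExpTail (d : ℕ) (γ c1 C1 : ℝ) (p0 : Euc d → ℝ) : Prop :=
  ∀ x : Euc d, p0 x ≤ C1 * Real.exp (-(c1 * ‖x‖ ^ γ))

/-- General kernel density estimator `\hat f_h(y) = (1/(n h^d)) Σ_i K((y − X_i)/h)`. -/
def kdeK (d n : ℕ) (K : Euc d → ℝ) (h : ℝ) (X : Fin n → Euc d) (y : Euc d) : ℝ :=
  ((n : ℝ) * h ^ d)⁻¹ * ∑ i, K (h⁻¹ • (y - X i))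

/-- Smoothed kernel estimator `\hat p_t = \hat f_h * φ_t`. -/
def hatptK (d n : ℕ) (K : Euc d → ℝ) (h t : ℝ) (X : Fin n → Euc d) (x : Euc d) : ℝ :=
  ∫ y, kdeK d n K h X y * gaussianKernel d t (x - y)

/-- Local sup of `p_t`: `p_t^*(x) = sup{ p_t(y) : ‖y − x‖_∞ ≤ h }`. -/
def ptStar (d : ℕ) (p0 : Euc d → ℝ) (t h : ℝ) (x : Euc d) : ℝ :=
  sSup ((fun y => pt d p0 t y) '' {y : Euc d | ∀ i, |y i - x i| ≤ h})

open ProbabilityTheory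

section SampleMean

variable {ι α : Type*} [Fintype ι] [MeasurableSpace α]

def sampleMean {E : Type*} [AddCommGroup E] [Module ℝ E] (f : α → E) (X : ι → α) : E :=
  (Fintype.card ι : ℝ)⁻¹ • ∑ i, f (X i)

variable {ν : Measure α} [IsProbabilityMeasure ν]

lemma memLp_sampleMean {E : Type*} [NormedAddCommGroup E] [NormedSpace ℝ E] {p : ENNReal}
    {f : α → E} (hf : MemLp f p ν) :
    MemLp (sampleMean f) p (Measure.pi fun _ : ι => ν) :=
  (memLp_finsetSum _ fun i _ => hf.comp_measurePreserving (measurePreserving_eval _ i)).const_smul _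

variable [Nonempty ι]

lemma integral_sq_sampleMean_sub_integral {g : α → ℝ} (hg : MemLp g 2 ν) :
    ∫ X, (sampleMean g X - ∫ y, g y ∂ν) ^ 2 ∂Measure.pi (fun _ : ι => ν)
      = (Fintype.card ι : ℝ)⁻¹ * Var[g; ν] := by
  set N : ℝ := (Fintype.card ι : ℝ)
  have hcoord : ∀ i : ι, MemLp (fun X : ι → α => g (X i)) 2 (Measure.pi fun _ => ν) :=
    fun i => hg.comp_measurePreserving (measurePreserving_eval _ i)
  have hmean : ∫ X, sampleMean g X ∂Measure.pi (fun _ : ι => ν) = ∫ y, g y ∂ν := by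
    simp_rw [sampleMean, smul_eq_mul]
    rw [integral_const_mul, integral_finsetSum _ fun i _ => (hcoord i).integrable one_le_two]
    simp_rw [fun i => integral_comp_eval (μ := fun _ : ι => ν) (i := i) hg.aestronglyMeasurable]
    simp
  have hsm : sampleMean g = N⁻¹ • ∑ i, fun X : ι → α => g (X i) := by
    ext X; simp [sampleMean, N]
  rw [← hmean, ← variance_eq_integral (memLp_sampleMean hg).aestronglyMeasurable.aemeasurable,
    hsm, variance_smul, variance_sum_pi fun _ => hg]
  simp [N]
  field_simp

lemma integral_sq_norm_sampleMean_sub_integral_le {κ : Type*} [Fintype κ]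
    {f : α → EuclideanSpace ℝ κ} (hf : MemLp f 2 ν) :
    ∫ X, ‖sampleMean f X - ∫ y, f y ∂ν‖ ^ 2 ∂Measure.pi (fun _ : ι => ν)
      ≤ (Fintype.card ι : ℝ)⁻¹ * ∫ y, ‖f y‖ ^ 2 ∂ν := by
  have hcoord : ∀ k, MemLp (fun y => f y k) 2 ν := fun k =>
    (EuclideanSpace.proj k : EuclideanSpace ℝ κ →L[ℝ] ℝ).comp_memLp' hf
  have hcoord_mean : ∀ k, (∫ y, f y ∂ν) k = ∫ y, f y k ∂ν := fun k =>
    ((EuclideanSpace.proj k : EuclideanSpace ℝ κ →L[ℝ] ℝ).integral_comp_comm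
      (hf.integrable one_le_two)).symm
  have hcoord_sampleMean :
      ∀ (k : κ) (X : ι → α), sampleMean f X k = sampleMean (fun y => f y k) X := by
    simp [sampleMean]
  simp_rw [EuclideanSpace.norm_sq_eq, Real.norm_eq_abs, sq_abs, PiLp.sub_apply,
    hcoord_sampleMean, hcoord_mean]
  rw [integral_finsetSum _ fun k _ => (hcoord k).integrable_sq, Finset.mul_sum,
    integral_finsetSum _ fun k _ => ?_]
  · refine Finset.sum_le_sum fun k _ => ?_
    rw [integral_sq_sampleMean_sub_integral (hcoord k)]
    exact mul_le_mul_of_nonneg_left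
      (variance_le_expectation_sq (hcoord k).aestronglyMeasurable) (by positivity)
  · exact ((memLp_sampleMean (hcoord k)).sub (memLp_const _)).integrable_sq

end SampleMean

section GaussianKernel

variable {d : ℕ} {t : ℝ}

lemma gaussianKernel_zero (ht : 0 ≤ t) :
    gaussianKernel d t 0 = ((2 * π * t) ^ ((d : ℝ) / 2))⁻¹ := by
  simp [gaussianKernel, neg_div, Real.rpow_neg (by positivity : 0 ≤ 2 * π * t)]

lemma gaussianKernel_nonneg (ht : 0 ≤ t) (z : Euc d) : 0 ≤ gaussianKernel d t z := by
  unfold gaussianKernel; positivity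

lemma gaussianKernel_le_gaussianKernel_zero (ht : 0 ≤ t) (z : Euc d) :
    gaussianKernel d t z ≤ gaussianKernel d t 0 := by
  rw [gaussianKernel, gaussianKernel, norm_zero]
  gcongr
  exact norm_nonneg z

@[fun_prop]
lemma continuous_gaussianKernel : Continuous (gaussianKernel d t) := by
  unfold gaussianKernel; fun_prop

lemma sq_norm_mul_gaussianKernel_le (ht : 0 < t) (z : Euc d) :
    ‖z‖ ^ 2 * gaussianKernel d t z ≤ t * gaussianKernel d t 0 := by
  set s := ‖z‖ ^ 2 / (2 * t)
  have hsplit : ‖z‖ ^ 2 * gaussianKernel d t z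
      = t * gaussianKernel d t 0 * (2 * (s * Real.exp (-s))) := by
    simp only [gaussianKernel, s, norm_zero]
    field_simp
    simp
  have hpeak : 2 * (s * Real.exp (-s)) ≤ 1 :=
    calc 2 * (s * Real.exp (-s)) ≤ 2 * Real.exp (-1) := by
          gcongr; exact Real.mul_exp_neg_le_exp_neg_one s
      _ ≤ 1 := by
          rw [Real.exp_neg, ← div_eq_mul_inv, div_le_one (Real.exp_pos 1)]
          linarith [Real.add_one_le_exp 1]
  rw [hsplit]
  exact mul_le_of_le_one_right (mul_nonneg ht.le (gaussianKernel_nonneg ht.le 0)) hpeak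

def gaussianKernelGrad (d : ℕ) (t : ℝ) (z : Euc d) : Euc d :=
  (-t⁻¹ * gaussianKernel d t z) • z

@[fun_prop]
lemma continuous_gaussianKernelGrad : Continuous (gaussianKernelGrad d t) := by
  unfold gaussianKernelGrad; fun_prop

lemma sq_norm_gaussianKernelGrad_le (ht : 0 < t) (z : Euc d) :
    ‖gaussianKernelGrad d t z‖ ^ 2 ≤ t⁻¹ * gaussianKernel d t 0 * gaussianKernel d t z := by
  have hφ := gaussianKernel_nonneg ht.le z
  calc ‖gaussianKernelGrad d t z‖ ^ 2
      = t⁻¹ ^ 2 * gaussianKernel d t z * (‖z‖ ^ 2 * gaussianKernel d t z) := by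
        rw [gaussianKernelGrad, norm_smul, Real.norm_eq_abs, abs_mul, abs_neg,
          abs_of_pos (inv_pos.mpr ht), abs_of_nonneg hφ]
        ring
    _ ≤ t⁻¹ ^ 2 * gaussianKernel d t z * (t * gaussianKernel d t 0) :=
        mul_le_mul_of_nonneg_left (sq_norm_mul_gaussianKernel_le ht z) (by positivity)
    _ = t⁻¹ * gaussianKernel d t 0 * gaussianKernel d t z := by
        field_simp

lemma memLp_gaussianKernelGrad_comp_sub (ht : 0 < t) (ν : Measure (Euc d)) [IsFiniteMeasure ν]
    (x : Euc d) : MemLp (fun y => gaussianKernelGrad d t (x - y)) 2 ν := by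
  refine (memLp_two_iff_integrable_sq_norm (by fun_prop)).mpr <|
    Integrable.of_bound (by fun_prop) (t⁻¹ * gaussianKernel d t 0 * gaussianKernel d t 0) <|
      Filter.Eventually.of_forall fun y => ?_
  rw [Real.norm_of_nonneg (by positivity)]
  exact (sq_norm_gaussianKernelGrad_le ht _).trans <| mul_le_mul_of_nonneg_left
    (gaussianKernel_le_gaussianKernel_zero ht.le _)
    (mul_nonneg (by positivity) (gaussianKernel_nonneg ht.le 0))

end GaussianKernel

section ProbDensity

variable {d : ℕ} {p0 : Euc d → ℝ}

def densityMeasure (p0 : Euc d → ℝ) : Measure (Euc d) :=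
  volume.withDensity fun y => ENNReal.ofReal (p0 y)

lemma sampleMeasure_eq_pi (n : ℕ) :
    sampleMeasure d n p0 = Measure.pi fun _ : Fin n => densityMeasure p0 := rfl

lemma IsProbDensity.isProbabilityMeasure (hp0 : IsProbDensity p0) :
    IsProbabilityMeasure (densityMeasure p0) := by
  obtain ⟨-, hnonneg, hone⟩ := hp0
  have hint : Integrable p0 := by
    by_contra h
    simp [integral_undef h] at hone
  constructor
  rw [densityMeasure, withDensity_apply _ MeasurableSet.univ, Measure.restrict_univ,
    ← ofReal_integral_eq_lintegral_ofReal hint (Filter.Eventually.of_forall hnonneg), hone,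
    ENNReal.ofReal_one]

lemma IsProbDensity.integral_densityMeasure {E : Type*} [NormedAddCommGroup E] [NormedSpace ℝ E]
    (hp0 : IsProbDensity p0) (g : Euc d → E) :
    ∫ y, g y ∂densityMeasure p0 = ∫ y, p0 y • g y := by
  rw [densityMeasure, integral_withDensity_eq_integral_toReal_smul hp0.1.ennreal_ofReal
    (Filter.Eventually.of_forall fun _ => ENNReal.ofReal_lt_top)]
  simp_rw [ENNReal.toReal_ofReal (hp0.2.1 _)]

end ProbDensity

section KDE

variable {d : ℕ} {t : ℝ} {p0 : Euc d → ℝ}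

lemma kdeGrad_eq_sampleMean (n : ℕ) (X : Fin n → Euc d) (x : Euc d) :
    kdeGrad d n t X x = sampleMean (fun y => gaussianKernelGrad d t (x - y)) X := by
  simp_rw [kdeGrad, sampleMean, Fintype.card_fin, gaussianKernelGrad, mul_inv, mul_smul,
    Finset.smul_sum]
  congr 1; ext1 i
  module

lemma IsProbDensity.ptGrad_eq_integral (hp0 : IsProbDensity p0) (x : Euc d) :
    ptGrad d p0 t x = ∫ y, gaussianKernelGrad d t (x - y) ∂densityMeasure p0 := by
  rw [hp0.integral_densityMeasure, ptGrad]
  congr 1; ext1 y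
  simp only [gaussianKernelGrad]
  module

lemma IsProbDensity.integral_sq_norm_gaussianKernelGrad_le (hp0 : IsProbDensity p0) (ht : 0 < t)
    (x : Euc d) :
    ∫ y, ‖gaussianKernelGrad d t (x - y)‖ ^ 2 ∂densityMeasure p0
      ≤ t⁻¹ * gaussianKernel d t 0 * pt d p0 t x := by
  have := hp0.isProbabilityMeasure
  have hφ : Integrable (fun y => gaussianKernel d t (x - y)) (densityMeasure p0) :=
    Integrable.of_bound (by fun_prop) (gaussianKernel d t 0) <|
      Filter.Eventually.of_forall fun y => by
        rw [Real.norm_of_nonneg (gaussianKernel_nonneg ht.le _)]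
        exact gaussianKernel_le_gaussianKernel_zero ht.le _
  calc _ ≤ ∫ y, t⁻¹ * gaussianKernel d t 0 * gaussianKernel d t (x - y) ∂densityMeasure p0 :=
        integral_mono (memLp_gaussianKernelGrad_comp_sub ht _ x).integrable_norm_pow'
          (hφ.const_mul _) fun y => sq_norm_gaussianKernelGrad_le ht _
    _ = t⁻¹ * gaussianKernel d t 0 * pt d p0 t x := by
        rw [integral_const_mul, hp0.integral_densityMeasure, pt]
        simp_rw [smul_eq_mul]

end KDE

theorem stmt1_general (d n : ℕ) (hn : 1 ≤ n) (t : ℝ) (ht : 0 < t)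
    (p0 : Euc d → ℝ) (hp0 : IsProbDensity p0) (x : Euc d) :
    (∫ X, ‖kdeGrad d n t X x - ptGrad d p0 t x‖ ^ 2 ∂sampleMeasure d n p0)
      ≤ pt d p0 t x / ((n : ℝ) * t * (2 * π * t) ^ ((d : ℝ) / 2)) := by
  have := hp0.isProbabilityMeasure
  have : Nonempty (Fin n) := ⟨⟨0, hn⟩⟩
  calc _ ≤ (n : ℝ)⁻¹ * ∫ y, ‖gaussianKernelGrad d t (x - y)‖ ^ 2 ∂densityMeasure p0 := by
        simp_rw [kdeGrad_eq_sampleMean, hp0.ptGrad_eq_integral, sampleMeasure_eq_pi]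
        simpa using integral_sq_norm_sampleMean_sub_integral_le (ι := Fin n)
          (memLp_gaussianKernelGrad_comp_sub ht (densityMeasure p0) x)
    _ ≤ (n : ℝ)⁻¹ * (t⁻¹ * gaussianKernel d t 0 * pt d p0 t x) := by
        gcongr
        exact hp0.integral_sq_norm_gaussianKernelGrad_le ht x
    _ = _ := by
        rw [gaussianKernel_zero ht.le]
        field_simp

/-- MSE bound for the gradient of the Gaussian KDE:
`E[‖∇\hat p_t(x) − ∇p_t(x)‖²] ≤ p_t(x) / (n t (2πt)^{d/2})`. -/
theorem stmt1 (d n : ℕ) (hd : 1 ≤ d) (hn : 1 ≤ n) (t : ℝ) (ht : 0 < t)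
    (p0 : Euc d → ℝ) (hp0 : IsProbDensity p0) (x : Euc d) :
    (∫ X, ‖kdeGrad d n t X x - ptGrad d p0 t x‖ ^ 2 ∂sampleMeasure d n p0)
      ≤ pt d p0 t x / ((n : ℝ) * t * (2 * π * t) ^ ((d : ℝ) / 2)) :=
  stmt1_general d n hn t ht p0 hp0 x
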